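/- Let d ≥ 1, σ ≥ 2, c ≠ 0, let f : ℝ^d → ℝ be continuously differentiable with gradient ∇f, and let J ⊆ (0, ∞) be an interval. Suppose q, p : J → ℝ^d are differentiable and satisfy the Hamiltonian system of H_V^Z, namely (d/dt)qᵃ(s) = 0 and (d/dt)pₐ(s) = σ² c · s^{3σ−1} · (∂f/∂qᵃ)(q(s)) for all s ∈ J and a = 1, …, d. Then for every t ∈ J and τ > 0 with t + τ ∈ J: qᵃ(t + τ) = qᵃ(t) and pₐ(t + τ) = pₐ(t) + (σc/3) · [(t + τ)^{3σ} − t^{3σ}] · (∂f/∂qᵃ)(q(t)) for a = 1, …, d. -/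

import Mathlib

/-! On `J` the position is frozen, since `q̇ = 0`; so the force `∂f/∂qᵃ(q(s))` is the constant
`∂f/∂qᵃ(q(t))`, and `ṗₐ` is that constant times `σ² c s^(3σ-1)`, whose primitive on `(0, ∞)` is
`(σ c / 3) s^(3σ)`. Both closed forms then follow from the mean value theorem on the convex set `J`. -/

section

variable {E : Type*} [NormedAddCommGroup E] [NormedSpace ℝ E] {s : Set ℝ} {x y : ℝ}

theorem Convex.eq_of_forall_hasDerivAt_zero (hs : Convex ℝ s) {g : ℝ → E}
    (hg : ∀ z ∈ s, HasDerivAt g 0 z) (hx : x ∈ s) (hy : y ∈ s) : g y = g x := by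
  have h := hs.norm_image_sub_le_of_norm_hasDerivWithin_le (C := 0)
    (fun z hz => (hg z hz).hasDerivWithinAt) (fun _ _ => norm_zero.le) hx hy
  rwa [zero_mul, norm_le_zero_iff, sub_eq_zero] at h

theorem Convex.sub_eq_sub_of_forall_hasDerivAt_eq (hs : Convex ℝ s) {f g f' : ℝ → E}
    (hf : ∀ z ∈ s, HasDerivAt f (f' z) z) (hg : ∀ z ∈ s, HasDerivAt g (f' z) z)
    (hx : x ∈ s) (hy : y ∈ s) : f y - f x = g y - g x :=
  sub_eq_sub_iff_sub_eq_sub.mpr <| hs.eq_of_forall_hasDerivAt_zero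
    (fun z hz => sub_self (f' z) ▸ (hf z hz).sub (hg z hz)) hx hy

end

theorem flow_of_HV_general
    (d : ℕ) (σ c : ℝ)
    (f : (Fin d → ℝ) → ℝ)
    (J : Set ℝ) (hJ : J ⊆ Set.Ioi 0) (hJconv : Convex ℝ J)
    (q p : ℝ → Fin d → ℝ)
    (hq : ∀ s ∈ J, ∀ a : Fin d, HasDerivAt (fun u => q u a) 0 s)
    (hp : ∀ s ∈ J, ∀ a : Fin d,
      HasDerivAt (fun u => p u a)
        (σ ^ 2 * c * s ^ (3 * σ - 1) *
          deriv (fun r : ℝ => f (Function.update (q s) a r)) (q s a)) s) :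
    ∀ t ∈ J, ∀ τ > (0 : ℝ), t + τ ∈ J → ∀ a : Fin d,
      q (t + τ) a = q t a ∧
      p (t + τ) a = p t a
        + σ * c / 3 * ((t + τ) ^ (3 * σ) - t ^ (3 * σ)) *
          deriv (fun r : ℝ => f (Function.update (q t) a r)) (q t a) := by
  intro t ht τ _ htτ a
  have hq_const : ∀ s ∈ J, q s = q t := fun s hs =>
    funext fun b => hJconv.eq_of_forall_hasDerivAt_zero (fun z hz => hq z hz b) ht hs
  set D := deriv (fun r : ℝ => f (Function.update (q t) a r)) (q t a)
  have hp_const_force : ∀ s ∈ J,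
      HasDerivAt (fun u => p u a) (σ ^ 2 * c * s ^ (3 * σ - 1) * D) s := fun s hs => by
    simpa only [hq_const s hs] using hp s hs a
  have hprimitive : ∀ s ∈ J,
      HasDerivAt (fun u : ℝ => σ * c / 3 * u ^ (3 * σ) * D) (σ ^ 2 * c * s ^ (3 * σ - 1) * D) s :=
    fun s hs =>
      (((Real.hasDerivAt_rpow_const (p := 3 * σ) (Or.inl (hJ hs).ne')).const_mul
        (σ * c / 3)).mul_const D).congr_deriv (by ring)
  refine ⟨congrFun (hq_const _ htτ) a, ?_⟩
  linear_combination hJconv.sub_eq_sub_of_forall_hasDerivAt_eq hp_const_force hprimitive ht htτ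

/-- **Lemma 8, `H_V^Z` half.** Along any solution of the Hamiltonian system of
`H_V^Z(q,t) = -σ² c t^(3σ-1) f(q)`, i.e. `q̇ᵃ = 0`,
`ṗₐ = σ² c t^(3σ-1) (∂f/∂qᵃ)(q)`, on an interval `J ⊆ (0, ∞)`, the flow from
`t` to `t + τ` is given in closed form: `qᵃ(t+τ) = qᵃ(t)` and
`pₐ(t+τ) = pₐ(t) + (σc/3) [(t+τ)^(3σ) - t^(3σ)] (∂f/∂qᵃ)(q(t))`. -/
theorem flow_of_HV
    (d : ℕ) (hd : 1 ≤ d) (σ c : ℝ) (hσ : 2 ≤ σ) (hc : c ≠ 0)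
    (f : (Fin d → ℝ) → ℝ) (hf : ContDiff ℝ 1 f)
    (J : Set ℝ) (hJ : J ⊆ Set.Ioi 0) (hJconv : Convex ℝ J)
    (q p : ℝ → Fin d → ℝ)
    (hq : ∀ s ∈ J, ∀ a : Fin d, HasDerivAt (fun u => q u a) 0 s)
    (hp : ∀ s ∈ J, ∀ a : Fin d,
      HasDerivAt (fun u => p u a)
        (σ ^ 2 * c * s ^ (3 * σ - 1) *
          deriv (fun r : ℝ => f (Function.update (q s) a r)) (q s a)) s) :
    ∀ t ∈ J, ∀ τ > (0 : ℝ), t + τ ∈ J → ∀ a : Fin d,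
      q (t + τ) a = q t a ∧
      p (t + τ) a = p t a
        + σ * c / 3 * ((t + τ) ^ (3 * σ) - t ^ (3 * σ)) *
          deriv (fun r : ℝ => f (Function.update (q t) a r)) (q t a) :=
  flow_of_HV_general d σ c f J hJ hJconv q p hq hp
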